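/- Let λ : ℕ → ℂ be a completely determined multiplicative function satisfying λ(m)λ(n) = ∑_{d ∣ gcd(m,n)} χ(d) λ(mn/d²) for all m,n ≥ 1, where χ is completely multiplicative with values in {0,1}. If μ is the Dirichlet inverse of λ, then μ(n) = 0 whenever n is not cube-free, and |μ(n)| ≤ ∑_{d² ∣ n, n/d² squarefree} |λ(n/d²)| ≤ d(n) · max_{m ∣ n} |λ(m)| for all n, where d(n) is the number of divisors of n. -/

import Mathlib

/-!
The relation at `m = n = 1` reads `λ(1)² = λ(1)`, and `λ(1)` is invertible since `μ(1) λ(1) = 1`,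
so `λ(1) = 1`. Then the relation with `gcd m n = 1` makes `λ` multiplicative, and with `m = p`,
`n = p^(k+1)` it becomes `λ(p^(k+2)) = λ(p) λ(p^(k+1)) - χ(p) λ(p^k)`. Hence the local Euler factor
of `λ` is `1 / (1 - λ(p) X + χ(p) X²)`, and `μ` is the multiplicative function with
`μ(p) = -λ(p)`, `μ(p²) = χ(p)` and `μ(p^e) = 0` for `e ≥ 3`. Writing `n = b² a` with `a`
squarefree, the primes dividing a cube-free `n` exactly once are those dividing `a`, so
`|μ(n)| ≤ ∏_{p ∣ a} |λ(p)| = |λ(a)|`, which is the term `d = b` of the middle sum.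
-/

open Finset ArithmeticFunction

lemma toArithmeticFunction_apply_of_ne_zero {R : Type*} [Zero R] (f : ℕ → R) {n : ℕ}
    (hn : n ≠ 0) : toArithmeticFunction f n = f n :=
  if_neg hn

section Convolution

variable {R : Type*} [Semiring R]

lemma toArithmeticFunction_mul_apply (f g : ℕ → R) {n : ℕ} (hn : n ≠ 0) :
    (toArithmeticFunction f * toArithmeticFunction g) n = ∑ d ∈ n.divisors, f d * g (n / d) := by
  rw [mul_apply, Nat.sum_divisorsAntidiagonal
    (fun a b => toArithmeticFunction f a * toArithmeticFunction g b)]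
  refine sum_congr rfl fun d hd => ?_
  obtain ⟨hdn, -⟩ := Nat.mem_divisors.mp hd
  have hd0 : d ≠ 0 := ne_zero_of_dvd_ne_zero hn hdn
  rw [toArithmeticFunction_apply_of_ne_zero f hd0,
    toArithmeticFunction_apply_of_ne_zero g (Nat.div_ne_zero_iff_of_dvd hdn |>.mpr ⟨hn, hd0⟩)]

lemma toArithmeticFunction_mul_eq_one {f g : ℕ → R}
    (h : ∀ n : ℕ, 1 ≤ n → ∑ d ∈ n.divisors, f d * g (n / d) = if n = 1 then 1 else 0) :
    toArithmeticFunction f * toArithmeticFunction g = 1 := by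
  ext n
  rcases Nat.eq_zero_or_pos n with rfl | hn
  · simp
  · rw [toArithmeticFunction_mul_apply f g hn.ne', h n hn, one_apply]

end Convolution

section Algebra

variable {R : Type*} [CommRing R]

def IsHecke (lam chi : ℕ → R) : Prop :=
  ∀ m n : ℕ, 1 ≤ m → 1 ≤ n →
    lam m * lam n = ∑ d ∈ (Nat.gcd m n).divisors, chi d * lam (m * n / d ^ 2)

namespace IsHecke

variable {lam chi : ℕ → R} (hchi1 : chi 1 = 1) (h : IsHecke lam chi)
include hchi1 h

lemma map_mul_of_coprime {m n : ℕ} (hm : m ≠ 0) (hn : n ≠ 0) (hmn : m.Coprime n) :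
    lam (m * n) = lam m * lam n := by
  rw [h m n (Nat.one_le_iff_ne_zero.mpr hm) (Nat.one_le_iff_ne_zero.mpr hn), hmn.gcd_eq_one]
  simp [hchi1]

lemma map_one (hunit : IsUnit (lam 1)) : lam 1 = 1 :=
  hunit.mul_eq_right.mp
    (h.map_mul_of_coprime hchi1 one_ne_zero one_ne_zero (Nat.coprime_one_left 1)).symm

lemma isMultiplicative (hlam1 : lam 1 = 1) : (toArithmeticFunction lam).IsMultiplicative := by
  refine IsMultiplicative.iff_ne_zero.mpr ⟨?_, fun hm hn hmn => ?_⟩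
  · rw [toArithmeticFunction_apply_of_ne_zero lam one_ne_zero, hlam1]
  · rw [toArithmeticFunction_apply_of_ne_zero lam (mul_ne_zero hm hn),
      toArithmeticFunction_apply_of_ne_zero lam hm, toArithmeticFunction_apply_of_ne_zero lam hn,
      h.map_mul_of_coprime hchi1 hm hn hmn]

lemma map_prime_pow_add_two {p : ℕ} (hp : p.Prime) (k : ℕ) :
    lam (p ^ (k + 2)) = lam p * lam (p ^ (k + 1)) - chi p * lam (p ^ k) := by
  have hgcd : Nat.gcd p (p ^ (k + 1)) = p := Nat.gcd_eq_left (dvd_pow_self p k.succ_ne_zero)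
  have hrec := h p (p ^ (k + 1)) hp.one_le (Nat.one_le_pow _ _ hp.pos)
  rw [hgcd, Nat.Prime.sum_divisors hp, ← pow_succ', Nat.pow_div (by omega) hp.pos] at hrec
  simp only [Nat.reduceSubDiff, hchi1, one_pow, Nat.div_one, one_mul] at hrec
  linear_combination -hrec

end IsHecke

def heckeCoeff (lam chi : ℕ → R) (p : ℕ) : ℕ → R
  | 0 => 1
  | 1 => -lam p
  | 2 => chi p
  | _ + 3 => 0

def heckeInv (lam chi : ℕ → R) : ArithmeticFunction R :=
  toArithmeticFunction fun n => n.factorization.prod (heckeCoeff lam chi)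

variable (lam chi : ℕ → R)

lemma heckeInv_apply {n : ℕ} (hn : n ≠ 0) :
    heckeInv lam chi n = ∏ p ∈ n.primeFactors, heckeCoeff lam chi p (n.factorization p) := by
  rw [heckeInv, toArithmeticFunction_apply_of_ne_zero _ hn, Finsupp.prod, Nat.support_factorization]

lemma heckeInv_apply_prime_pow {p : ℕ} (hp : p.Prime) (e : ℕ) :
    heckeInv lam chi (p ^ e) = heckeCoeff lam chi p e := by
  rcases Nat.eq_zero_or_pos e with rfl | he
  · simp [heckeInv, toArithmeticFunction, heckeCoeff]
  · rw [heckeInv_apply lam chi (pow_ne_zero _ hp.ne_zero), Nat.primeFactors_prime_pow he.ne' hp,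
      prod_singleton, hp.factorization_pow, Finsupp.single_eq_same]

lemma isMultiplicative_heckeInv : (heckeInv lam chi).IsMultiplicative := by
  refine IsMultiplicative.iff_ne_zero.mpr ⟨?_, fun hm hn hmn => ?_⟩
  · simp [heckeInv, toArithmeticFunction]
  · rw [heckeInv, toArithmeticFunction_apply_of_ne_zero _ hm,
      toArithmeticFunction_apply_of_ne_zero _ hn,
      toArithmeticFunction_apply_of_ne_zero _ (mul_ne_zero hm hn), Nat.factorization_mul hm hn,
      Finsupp.prod_add_index_of_disjoint]
    rw [Nat.support_factorization, Nat.support_factorization]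
    exact hmn.disjoint_primeFactors

lemma heckeInv_eq_zero_of_pow_three_dvd {m n : ℕ} (hm : 1 < m) (hmn : m ^ 3 ∣ n) :
    heckeInv lam chi n = 0 := by
  rcases eq_or_ne n 0 with rfl | hn
  · exact ArithmeticFunction.map_zero
  have hp : m.minFac.Prime := Nat.minFac_prime hm.ne'
  have h3 : 3 ≤ n.factorization m.minFac :=
    (hp.pow_dvd_iff_le_factorization hn).mp ((pow_dvd_pow_of_dvd m.minFac_dvd 3).trans hmn)
  rw [heckeInv_apply lam chi hn]
  refine prod_eq_zero
    (Nat.mem_primeFactors.mpr ⟨hp, Nat.dvd_of_factorization_pos (by omega), hn⟩) ?_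
  obtain ⟨k, hk⟩ := Nat.exists_eq_add_of_le' h3
  rw [hk, heckeCoeff]

variable {lam chi}

lemma IsHecke.mul_heckeInv_eq_one (hchi1 : chi 1 = 1) (h : IsHecke lam chi)
    (hlam1 : lam 1 = 1) : toArithmeticFunction lam * heckeInv lam chi = 1 := by
  rw [mul_comm, IsMultiplicative.eq_iff_eq_on_prime_powers _
    ((isMultiplicative_heckeInv lam chi).mul (h.isMultiplicative hchi1 hlam1)) _
    isMultiplicative_one]
  intro p i hp
  rw [mul_apply, Nat.sum_divisorsAntidiagonal
    (fun a b => heckeInv lam chi a * toArithmeticFunction lam b), Nat.sum_divisors_prime_pow hp]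
  have hterm : ∀ j ∈ range (i + 1),
      heckeInv lam chi (p ^ j) * toArithmeticFunction lam (p ^ i / p ^ j) =
        heckeCoeff lam chi p j * lam (p ^ (i - j)) := fun j hj => by
    rw [heckeInv_apply_prime_pow lam chi hp,
      Nat.pow_div (Nat.lt_succ_iff.mp (mem_range.mp hj)) hp.pos,
      toArithmeticFunction_apply_of_ne_zero _ (pow_ne_zero _ hp.ne_zero)]
  rw [sum_congr rfl hterm]
  rcases i with _ | _ | k
  · simp [heckeCoeff, hlam1]
  · simp [sum_range_succ, heckeCoeff, hlam1, one_apply, hp.ne_one]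
  · have hne : p ^ (k + 2) ≠ 1 := (Nat.one_lt_pow (by omega) hp.one_lt).ne'
    simp only [sum_range_succ', heckeCoeff, zero_mul, sum_const_zero, Nat.reduceSubDiff,
      tsub_zero, one_apply, hne, if_false]
    rw [h.map_prime_pow_add_two hchi1 hp]
    ring

lemma IsHecke.map_one_of_mul_eq_one (hchi1 : chi 1 = 1) (h : IsHecke lam chi)
    {μ : ArithmeticFunction R} (hμ : μ * toArithmeticFunction lam = 1) : lam 1 = 1 := by
  have hμ1 : μ 1 * lam 1 = 1 := by
    simpa [toArithmeticFunction_apply_of_ne_zero] using congrArg (· 1) hμ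
  exact h.map_one hchi1 (IsUnit.of_mul_eq_one_right _ hμ1)

lemma IsHecke.eq_heckeInv_of_mul_eq_one (hchi1 : chi 1 = 1) (h : IsHecke lam chi)
    {μ : ArithmeticFunction R} (hμ : μ * toArithmeticFunction lam = 1) : μ = heckeInv lam chi :=
  left_inv_eq_right_inv hμ (h.mul_heckeInv_eq_one hchi1 (h.map_one_of_mul_eq_one hchi1 hμ))

end Algebra

lemma sum_ite_le_card_mul_sup' {E : Type*} [SeminormedAddCommGroup E] (lam : ℕ → E) {n : ℕ}
    (H : n.divisors.Nonempty) :
    (∑ d ∈ n.divisors, if d ^ 2 ∣ n ∧ Squarefree (n / d ^ 2) then ‖lam (n / d ^ 2)‖ else 0) ≤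
      n.divisors.card * n.divisors.sup' H (fun m => ‖lam m‖) := by
  have hn : n ≠ 0 := Nat.nonempty_divisors.mp H
  rw [← nsmul_eq_mul]
  refine sum_le_card_nsmul _ _ _ fun d _ => ?_
  split_ifs with hd
  · exact le_sup' (fun m => ‖lam m‖) (Nat.mem_divisors.mpr ⟨Nat.div_dvd_of_dvd hd.1, hn⟩)
  · exact (norm_nonneg _).trans (le_sup' (fun m => ‖lam m‖) (Nat.mem_divisors_self n hn))

section Norm

variable {R : Type*} [SeminormedCommRing R] [NormMulClass R] [NormOneClass R] {lam chi : ℕ → R}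

lemma norm_heckeInv_le (hlam : (toArithmeticFunction lam).IsMultiplicative)
    (hchi : ∀ p, ‖chi p‖ ≤ 1) {a b n : ℕ} (hab : b ^ 2 * a = n) (ha : Squarefree a) :
    ‖heckeInv lam chi n‖ ≤ ‖lam a‖ := by
  rcases eq_or_ne n 0 with rfl | hn
  · simp
  have hb : b ≠ 0 := fun hb => hn (by simp [← hab, hb])
  have hexp : ∀ p, n.factorization p = 2 * b.factorization p + a.factorization p := fun p => by
    rw [← hab, Nat.factorization_mul (pow_ne_zero 2 hb) ha.ne_zero, Nat.factorization_pow]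
    simp [mul_comm]
  have hlama : ∏ p ∈ a.primeFactors, lam p = lam a := by
    rw [← toArithmeticFunction_apply_of_ne_zero lam ha.ne_zero, ← hlam.prod_primeFactors ha]
    exact prod_congr rfl fun p hp =>
      (toArithmeticFunction_apply_of_ne_zero lam (Nat.pos_of_mem_primeFactors hp).ne').symm
  have hsub : a.primeFactors ⊆ n.primeFactors := Nat.primeFactors_mono (hab ▸ dvd_mul_left a _) hn
  calc ‖heckeInv lam chi n‖
        = ∏ p ∈ n.primeFactors, ‖heckeCoeff lam chi p (n.factorization p)‖ := by
        rw [heckeInv_apply lam chi hn, norm_prod]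
    _ ≤ ∏ p ∈ n.primeFactors, if p ∈ a.primeFactors then ‖lam p‖ else 1 := by
        refine prod_le_prod (fun _ _ => norm_nonneg _) fun p hp => ?_
        have hp0 : n.factorization p ≠ 0 :=
          Finsupp.mem_support_iff.mp (n.support_factorization ▸ hp)
        have hpn := hexp p
        have hpa := ha.natFactorization_le_one p
        have hmem : p ∈ a.primeFactors ↔ a.factorization p ≠ 0 := by
          rw [← a.support_factorization, Finsupp.mem_support_iff]
        obtain he | he | he :
            n.factorization p = 1 ∨ n.factorization p = 2 ∨ 3 ≤ n.factorization p := by omega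
        · rw [he, if_pos (hmem.mpr (by omega)), heckeCoeff, norm_neg]
        · rw [he, if_neg (by rw [hmem]; omega), heckeCoeff]
          exact hchi p
        · obtain ⟨k, hk⟩ := Nat.exists_eq_add_of_le' he
          rw [hk, heckeCoeff, norm_zero]
          split_ifs <;> positivity
    _ = ‖lam a‖ := by rw [prod_ite_mem, inter_eq_right.mpr hsub, ← norm_prod, hlama]

lemma norm_heckeInv_le_sum (hlam : (toArithmeticFunction lam).IsMultiplicative)
    (hchi : ∀ p, ‖chi p‖ ≤ 1) {n : ℕ} (hn : n ≠ 0) :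
    ‖heckeInv lam chi n‖ ≤
      ∑ d ∈ n.divisors, if d ^ 2 ∣ n ∧ Squarefree (n / d ^ 2) then ‖lam (n / d ^ 2)‖ else 0 := by
  obtain ⟨a, b, hab, ha⟩ := Nat.sq_mul_squarefree n
  have hb2 : b ^ 2 ∣ n := hab ▸ dvd_mul_right _ _
  have hna : n / b ^ 2 = a := by
    rw [← hab, Nat.mul_div_cancel_left _ (pos_of_ne_zero fun hb => hn (by simp [← hab, hb]))]
  have hb : b ∈ n.divisors := Nat.mem_divisors.mpr ⟨(dvd_pow_self b two_ne_zero).trans hb2, hn⟩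
  calc ‖heckeInv lam chi n‖ ≤ ‖lam a‖ := norm_heckeInv_le hlam hchi hab ha
    _ = if b ^ 2 ∣ n ∧ Squarefree (n / b ^ 2) then ‖lam (n / b ^ 2)‖ else 0 := by
        rw [hna, if_pos ⟨hb2, ha⟩]
    _ ≤ _ := single_le_sum (f := fun d => if d ^ 2 ∣ n ∧ Squarefree (n / d ^ 2)
          then ‖lam (n / d ^ 2)‖ else 0) (fun _ _ => ite_nonneg (norm_nonneg _) le_rfl) hb

end Norm

open Finset in
theorem stmt_2_general (lam mu chi : ℕ → ℂ)
    (hchi1 : chi 1 = 1)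
    (hchival : ∀ n : ℕ, chi n = 0 ∨ chi n = 1)
    (hhecke : ∀ m n : ℕ, 1 ≤ m → 1 ≤ n →
      lam m * lam n = ∑ d ∈ (Nat.gcd m n).divisors, chi d * lam (m * n / d ^ 2))
    (hmu : ∀ n : ℕ, 1 ≤ n →
      (∑ d ∈ n.divisors, mu d * lam (n / d)) = if n = 1 then 1 else 0) :
    ∀ (n : ℕ) (hn : 1 ≤ n),
      ((∃ m : ℕ, 1 < m ∧ m ^ 3 ∣ n) → mu n = 0) ∧
      ‖mu n‖ ≤
        ∑ d ∈ n.divisors, (if d ^ 2 ∣ n ∧ Squarefree (n / d ^ 2)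
          then ‖lam (n / d ^ 2)‖ else 0) ∧
      (∑ d ∈ n.divisors, (if d ^ 2 ∣ n ∧ Squarefree (n / d ^ 2)
          then ‖lam (n / d ^ 2)‖ else 0)) ≤
        (n.divisors.card : ℝ) *
          n.divisors.sup' (Nat.nonempty_divisors.mpr (Nat.one_le_iff_ne_zero.mp hn))
            (fun m => ‖lam m‖) := by
  have hmuF := toArithmeticFunction_mul_eq_one hmu
  have hlam : (toArithmeticFunction lam).IsMultiplicative :=
    IsHecke.isMultiplicative hchi1 hhecke (IsHecke.map_one_of_mul_eq_one hchi1 hhecke hmuF)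
  have hmuG := IsHecke.eq_heckeInv_of_mul_eq_one hchi1 hhecke hmuF
  have hchi : ∀ p, ‖chi p‖ ≤ 1 := fun p => by rcases hchival p with h | h <;> simp [h]
  intro n hn
  have hn0 : n ≠ 0 := Nat.one_le_iff_ne_zero.mp hn
  have hmun : mu n = heckeInv lam chi n := by
    rw [← hmuG, toArithmeticFunction_apply_of_ne_zero mu hn0]
  refine ⟨fun ⟨m, hm, hdvd⟩ => ?_, ?_, sum_ite_le_card_mul_sup' lam _⟩
  · rw [hmun, heckeInv_eq_zero_of_pow_three_dvd lam chi hm hdvd]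
  · rw [hmun]
    exact norm_heckeInv_le_sum hlam hchi hn0

open Finset in
/-- Support and size bounds for the Dirichlet inverse of a function satisfying
the Hecke multiplication law. -/
theorem stmt_2 (lam mu chi : ℕ → ℂ)
    (hchi1 : chi 1 = 1)
    (hchimult : ∀ m n : ℕ, chi (m * n) = chi m * chi n)
    (hchival : ∀ n : ℕ, chi n = 0 ∨ chi n = 1)
    (hhecke : ∀ m n : ℕ, 1 ≤ m → 1 ≤ n →
      lam m * lam n = ∑ d ∈ (Nat.gcd m n).divisors, chi d * lam (m * n / d ^ 2))
    (hmu : ∀ n : ℕ, 1 ≤ n →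
      (∑ d ∈ n.divisors, mu d * lam (n / d)) = if n = 1 then 1 else 0) :
    ∀ (n : ℕ) (hn : 1 ≤ n),
      ((∃ m : ℕ, 1 < m ∧ m ^ 3 ∣ n) → mu n = 0) ∧
      ‖mu n‖ ≤
        ∑ d ∈ n.divisors, (if d ^ 2 ∣ n ∧ Squarefree (n / d ^ 2)
          then ‖lam (n / d ^ 2)‖ else 0) ∧
      (∑ d ∈ n.divisors, (if d ^ 2 ∣ n ∧ Squarefree (n / d ^ 2)
          then ‖lam (n / d ^ 2)‖ else 0)) ≤
        (n.divisors.card : ℝ) *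
          n.divisors.sup' (Nat.nonempty_divisors.mpr (Nat.one_le_iff_ne_zero.mp hn))
            (fun m => ‖lam m‖) :=
  stmt_2_general lam mu chi hchi1 hchival hhecke hmu
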